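/- Let f be the Fibonacci sequence with f_0 = f_1 = 1. The map x ↦ F̂x with (F̂x)_k = (f_k/f_{k+1})x_k − (f_{k+1}/f_k)x_{k−1} (x_{−1}=0) is a linear bijection from c_0(F̂,p) onto c_0(p) = {y : lim_k |y_k|^{p_k} = 0}, for any bounded strictly positive sequence (p_k). -/

import Mathlib

open Filter Topology

def fibo : ℕ → ℕ
  | 0 => 1
  | 1 => 1
  | n + 2 => fibo (n + 1) + fibo n

noncomputable def Fhat (x : ℕ → ℝ) : ℕ → ℝ
  | 0 => (fibo 0 : ℝ) / fibo 1 * x 0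
  | k + 1 => (fibo (k + 1) : ℝ) / fibo (k + 2) * x (k + 1)
      - (fibo (k + 2) : ℝ) / fibo (k + 1) * x k

noncomputable def xseq (y : ℕ → ℝ) (k : ℕ) : ℝ :=
  ∑ j ∈ Finset.range (k + 1), ((fibo (k + 1) : ℝ) ^ 2 / ((fibo j : ℝ) * fibo (j + 1))) * y j

/-! `Fhat` is a lower bidiagonal map on `ℕ → ℝ` with nonzero diagonal, so it is a bijection of
the whole sequence space, with inverse `xseq`. Writing `xseq y k = f_{k+1}² S_k` with
`S_k = ∑_{j ≤ k} y_j / (f_j f_{j+1})`, both coefficients of `Fhat` become `f_{k+1} f_{k+2}` and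
`Fhat` telescopes `S` back to `y`. Since `c_0(F̂, p)` is the preimage of `c_0(p)` under `Fhat`,
the bijection restricts to it. -/

lemma fibo_pos : ∀ n, 0 < fibo n
  | 0 | 1 => Nat.one_pos
  | n + 2 => Nat.add_pos_left (fibo_pos (n + 1)) _

lemma fibo_cast_ne_zero (n : ℕ) : (fibo n : ℝ) ≠ 0 :=
  Nat.cast_ne_zero.2 (fibo_pos n).ne'

lemma isLinearMap_Fhat : IsLinearMap ℝ Fhat where
  map_add x y := by funext n; cases n <;> simp only [Fhat, Pi.add_apply] <;> ring
  map_smul c x := by funext n; cases n <;> simp only [Fhat, Pi.smul_apply, smul_eq_mul] <;> ring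

lemma Fhat_injective : Function.Injective Fhat := by
  intro x y h
  funext n
  induction n with
  | zero => simpa [Fhat, fibo] using congrFun h 0
  | succ k ih =>
    have hk := congrFun h (k + 1)
    simp only [Fhat, ih, sub_left_inj] at hk
    exact mul_left_cancel₀ (div_ne_zero (fibo_cast_ne_zero _) (fibo_cast_ne_zero _)) hk

lemma xseq_eq_mul_sum (y : ℕ → ℝ) (k : ℕ) :
    xseq y k = (fibo (k + 1) : ℝ) ^ 2 *
      ∑ j ∈ Finset.range (k + 1), y j / ((fibo j : ℝ) * fibo (j + 1)) := by
  rw [xseq, Finset.mul_sum]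
  exact Finset.sum_congr rfl fun j _ => by ring

lemma Fhat_xseq (y : ℕ → ℝ) : Fhat (xseq y) = y := by
  funext n
  cases n with
  | zero => simp [Fhat, xseq, fibo]
  | succ k =>
    have := fibo_cast_ne_zero (k + 1)
    have := fibo_cast_ne_zero (k + 2)
    simp only [Fhat, xseq_eq_mul_sum, Finset.sum_range_succ _ (k + 1)]
    field_simp
    ring

lemma Fhat_bijective : Function.Bijective Fhat :=
  ⟨Fhat_injective, Function.HasRightInverse.surjective ⟨xseq, Fhat_xseq⟩⟩

theorem Fhat_bijOn_c0_general (p : ℕ → ℝ) (A B : Set (ℕ → ℝ))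
    (hA : A = {x | Tendsto (fun n => |Fhat x n| ^ p n) atTop (𝓝 0)})
    (hB : B = {y | Tendsto (fun n => |y n| ^ p n) atTop (𝓝 0)}) :
    IsLinearMap ℝ Fhat ∧ Set.BijOn Fhat A B := by
  have hA_preimage : A = Fhat ⁻¹' B := by rw [hA, hB]; rfl
  exact ⟨isLinearMap_Fhat, hA_preimage ▸ Fhat_bijective.bijOn_preimage⟩

theorem Fhat_bijOn_c0 (p : ℕ → ℝ) (H : ℝ) (hp : ∀ k, 0 < p k) (hH : ∀ k, p k ≤ H)
    (A B : Set (ℕ → ℝ))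
    (hA : A = {x | Tendsto (fun n => |Fhat x n| ^ p n) atTop (𝓝 0)})
    (hB : B = {y | Tendsto (fun n => |y n| ^ p n) atTop (𝓝 0)}) :
    IsLinearMap ℝ Fhat ∧ Set.BijOn Fhat A B :=
  Fhat_bijOn_c0_general p A B hA hB
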